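/- With Z = e^ε cosh(h_+) + e^{-ε} cosh(h_-), the determinant of the Hessian of π_ε(h_+,h_-) = log(2Z) equals Z^{-4}·(1 + 2cosh(2ε)cosh(h_+)cosh(h_-) + cosh²(h_+)cosh²(h_-) − sinh²(h_+)sinh²(h_-)), and this quantity is strictly positive. -/

import Mathlib

noncomputable def piE (ε h₁ h₂ : ℝ) : ℝ :=
  Real.log (2 * (Real.exp ε * Real.cosh h₁ + Real.exp (-ε) * Real.cosh h₂))

noncomputable def piE1 (ε : ℝ) (h : ℝ × ℝ) : ℝ := deriv (fun x => piE ε x h.2) h.1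
noncomputable def piE2 (ε : ℝ) (h : ℝ × ℝ) : ℝ := deriv (fun y => piE ε h.1 y) h.2

/-- The Hessian matrix of `π_ε` at the point `h = (h₊, h₋)`. -/
noncomputable def hessPiE (ε : ℝ) (h : ℝ × ℝ) : Matrix (Fin 2) (Fin 2) ℝ :=
  !![deriv (fun x => piE1 ε (x, h.2)) h.1, deriv (fun y => piE1 ε (h.1, y)) h.2;
     deriv (fun x => piE2 ε (x, h.2)) h.1, deriv (fun y => piE2 ε (h.1, y)) h.2]

/-! Proof idea: with `a = e^ε`, `b = e^{-ε}` and `Z = a cosh h₊ + b cosh h₋`, the Hessian of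
`log (2Z)` is `Z⁻²` times `!![a (a + b cosh h₊ cosh h₋), -ab sinh h₊ sinh h₋; …]`, by
`cosh² - sinh² = 1`. Its determinant is `ab · Z · (b cosh h₊ + a cosh h₋) / Z⁴`, manifestly
positive, and the same identity turns the bracket of the statement into `Z (b cosh h₊ + a cosh h₋)`
once `ab = 1` and `a² + b² = 2 cosh 2ε`. -/

open Real

noncomputable def coshSum (a b x y : ℝ) : ℝ := a * cosh x + b * cosh y

lemma coshSum_comm (a b x y : ℝ) : coshSum a b x y = coshSum b a y x :=
  add_comm _ _

lemma coshSum_pos {a b : ℝ} (ha : 0 < a) (hb : 0 < b) (x y : ℝ) : 0 < coshSum a b x y :=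
  add_pos (mul_pos ha (cosh_pos x)) (mul_pos hb (cosh_pos y))

lemma piE_eq_log_coshSum (ε x y : ℝ) : piE ε x y = log (2 * coshSum (exp ε) (exp (-ε)) x y) :=
  rfl

lemma coshSum_mul_coshSum_swap (a b x y : ℝ) :
    coshSum a b x y * coshSum b a x y =
      a * b * (cosh x ^ 2 + cosh y ^ 2) + (a ^ 2 + b ^ 2) * cosh x * cosh y := by
  unfold coshSum; ring

lemma one_add_cosh_sq_mul_cosh_sq_sub_sinh_sq_mul_sinh_sq (x y : ℝ) :
    1 + cosh x ^ 2 * cosh y ^ 2 - sinh x ^ 2 * sinh y ^ 2 = cosh x ^ 2 + cosh y ^ 2 := by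
  rw [sinh_sq, sinh_sq]; ring

section Derivatives

variable {a b x y : ℝ}

lemma hasDerivAt_coshSum_left : HasDerivAt (fun t => coshSum a b t y) (a * sinh x) x :=
  ((hasDerivAt_cosh x).const_mul a).add_const _

lemma hasDerivAt_log_two_mul_coshSum_left (hZ : coshSum a b x y ≠ 0) :
    HasDerivAt (fun t => log (2 * coshSum a b t y)) (a * sinh x / coshSum a b x y) x := by
  have := (hasDerivAt_coshSum_left.const_mul 2).log (mul_ne_zero two_ne_zero hZ)
  rwa [mul_div_mul_left _ _ two_ne_zero] at this

lemma hasDerivAt_mul_sinh_div_coshSum_left (hZ : coshSum a b x y ≠ 0) :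
    HasDerivAt (fun t => a * sinh t / coshSum a b t y)
      (a * (a + b * cosh x * cosh y) / coshSum a b x y ^ 2) x := by
  refine (((hasDerivAt_sinh x).const_mul a).div hasDerivAt_coshSum_left hZ).congr_deriv ?_
  rw [div_left_inj' (pow_ne_zero 2 hZ)]
  unfold coshSum
  linear_combination a ^ 2 * cosh_sq_sub_sinh_sq x

lemma hasDerivAt_const_div_coshSum_left (k : ℝ) (hZ : coshSum a b x y ≠ 0) :
    HasDerivAt (fun t => k / coshSum a b t y) (-(k * (a * sinh x)) / coshSum a b x y ^ 2) x := by
  have := (hasDerivAt_const x k).div hasDerivAt_coshSum_left hZ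
  rwa [zero_mul, zero_sub] at this

end Derivatives

lemma piE1_eq (ε x y : ℝ) :
    piE1 ε (x, y) = exp ε * sinh x / coshSum (exp ε) (exp (-ε)) x y :=
  (hasDerivAt_log_two_mul_coshSum_left (coshSum_pos (exp_pos _) (exp_pos _) x y).ne').deriv

lemma piE2_eq (ε x y : ℝ) :
    piE2 ε (x, y) = exp (-ε) * sinh y / coshSum (exp ε) (exp (-ε)) x y := by
  simp only [piE2, piE_eq_log_coshSum, coshSum_comm (exp ε)]
  exact (hasDerivAt_log_two_mul_coshSum_left (coshSum_pos (exp_pos _) (exp_pos _) y x).ne').deriv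

noncomputable def hessLogCoshSum (a b x y : ℝ) : Matrix (Fin 2) (Fin 2) ℝ :=
  !![a * (a + b * cosh x * cosh y) / coshSum a b x y ^ 2,
      -(a * sinh x * (b * sinh y)) / coshSum a b x y ^ 2;
     -(b * sinh y * (a * sinh x)) / coshSum a b x y ^ 2,
      b * (b + a * cosh y * cosh x) / coshSum a b x y ^ 2]

lemma hessPiE_eq (ε x y : ℝ) : hessPiE ε (x, y) = hessLogCoshSum (exp ε) (exp (-ε)) x y := by
  have hZ := (coshSum_pos (exp_pos ε) (exp_pos (-ε)) x y).ne'
  have hZ' := (coshSum_pos (exp_pos (-ε)) (exp_pos ε) y x).ne'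
  have h11 : (fun t => piE1 ε (t, y)) =
      fun t => exp ε * sinh t / coshSum (exp ε) (exp (-ε)) t y :=
    funext fun t => piE1_eq ε t y
  have h12 : (fun t => piE1 ε (x, t)) =
      fun t => exp ε * sinh x / coshSum (exp (-ε)) (exp ε) t x :=
    funext fun t => by rw [piE1_eq, coshSum_comm]
  have h21 : (fun t => piE2 ε (t, y)) =
      fun t => exp (-ε) * sinh y / coshSum (exp ε) (exp (-ε)) t y :=
    funext fun t => piE2_eq ε t y
  have h22 : (fun t => piE2 ε (x, t)) =
      fun t => exp (-ε) * sinh t / coshSum (exp (-ε)) (exp ε) t x :=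
    funext fun t => by rw [piE2_eq, coshSum_comm]
  rw [hessPiE, hessLogCoshSum]
  simp only [h11, h12, h21, h22]
  rw [(hasDerivAt_mul_sinh_div_coshSum_left hZ).deriv,
    (hasDerivAt_const_div_coshSum_left _ hZ').deriv,
    (hasDerivAt_const_div_coshSum_left _ hZ).deriv,
    (hasDerivAt_mul_sinh_div_coshSum_left hZ').deriv, ← coshSum_comm]

lemma det_hessLogCoshSum {a b x y : ℝ} (hZ : coshSum a b x y ≠ 0) :
    (hessLogCoshSum a b x y).det = a * b * coshSum b a x y / coshSum a b x y ^ 3 := by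
  have key : a * (a + b * cosh x * cosh y) * (b * (b + a * cosh y * cosh x)) -
      (a * sinh x * (b * sinh y)) ^ 2 = a * b * (coshSum a b x y * coshSum b a x y) := by
    rw [coshSum_mul_coshSum_swap, ← one_add_cosh_sq_mul_cosh_sq_sub_sinh_sq_mul_sinh_sq]
    ring
  rw [hessLogCoshSum, Matrix.det_fin_two_of]
  field_simp
  linear_combination key

lemma det_hessPiE (ε x y : ℝ) :
    (hessPiE ε (x, y)).det =
      coshSum (exp (-ε)) (exp ε) x y / coshSum (exp ε) (exp (-ε)) x y ^ 3 := by
  rw [hessPiE_eq, det_hessLogCoshSum (coshSum_pos (exp_pos _) (exp_pos _) x y).ne', ← exp_add,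
    add_neg_cancel, exp_zero, one_mul]

lemma one_add_cosh_two_mul_cosh_cosh_eq_coshSum_mul_coshSum (ε x y : ℝ) :
    1 + 2 * cosh (2 * ε) * cosh x * cosh y + cosh x ^ 2 * cosh y ^ 2 - sinh x ^ 2 * sinh y ^ 2 =
      coshSum (exp ε) (exp (-ε)) x y * coshSum (exp (-ε)) (exp ε) x y := by
  have hab : exp ε * exp (-ε) = 1 := by rw [← exp_add, add_neg_cancel, exp_zero]
  have hcosh : 2 * cosh (2 * ε) = exp ε ^ 2 + exp (-ε) ^ 2 := by
    rw [cosh_eq, ← exp_nat_mul, ← exp_nat_mul, mul_neg]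
    push_cast
    ring
  rw [coshSum_mul_coshSum_swap, hab, hcosh,
    ← one_add_cosh_sq_mul_cosh_sq_sub_sinh_sq_mul_sinh_sq]
  ring

theorem hessian_det_formula_and_pos_general (ε : ℝ) (h : ℝ × ℝ)
    (Z : ℝ) (hZ : Z = Real.exp ε * Real.cosh h.1 + Real.exp (-ε) * Real.cosh h.2) :
    (hessPiE ε h).det =
      Z ^ (-4 : ℤ) *
        (1 + 2 * Real.cosh (2 * ε) * Real.cosh h.1 * Real.cosh h.2 +
          Real.cosh h.1 ^ 2 * Real.cosh h.2 ^ 2 -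
          Real.sinh h.1 ^ 2 * Real.sinh h.2 ^ 2) ∧
      0 < (hessPiE ε h).det := by
  obtain ⟨x, y⟩ := h
  have hZ : Z = coshSum (exp ε) (exp (-ε)) x y := hZ
  subst hZ
  have hZpos := coshSum_pos (exp_pos ε) (exp_pos (-ε)) x y
  refine ⟨?_, ?_⟩
  · rw [det_hessPiE, one_add_cosh_two_mul_cosh_cosh_eq_coshSum_mul_coshSum, zpow_neg, zpow_ofNat]
    field_simp
  · rw [det_hessPiE]
    exact div_pos (coshSum_pos (exp_pos _) (exp_pos _) x y) (pow_pos hZpos 3)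

theorem hessian_det_formula_and_pos (ε : ℝ) (hε : 0 ≤ ε) (h : ℝ × ℝ)
    (Z : ℝ) (hZ : Z = Real.exp ε * Real.cosh h.1 + Real.exp (-ε) * Real.cosh h.2) :
    (hessPiE ε h).det =
      Z ^ (-4 : ℤ) *
        (1 + 2 * Real.cosh (2 * ε) * Real.cosh h.1 * Real.cosh h.2 +
          Real.cosh h.1 ^ 2 * Real.cosh h.2 ^ 2 -
          Real.sinh h.1 ^ 2 * Real.sinh h.2 ^ 2) ∧
      0 < (hessPiE ε h).det :=
  hessian_det_formula_and_pos_general ε h Z hZ
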